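/- Let Σ_o, Σ_uc ⊆ Σ with Σ − Σ_o ⊆ Σ_uc (every unobservable event is uncontrollable, as when Σ_c ⊆ Σ_o). Let M_O = (U, Σ_o, η, u0) be a deterministic automaton over Σ_o with O = L(M_O), and define S^↓ = (U, Σ, η^S, u0) by: η^S(u, σ) = η(u, σ) for σ ∈ Σ_o when defined; η^S(u, σ) = u for σ ∈ Σ_uc ∩ (Σ − Σ_o); and η^S(u, σ) = u_⊥ for σ ∈ Σ_uc ∩ Σ_o with η(u, σ) undefined, where u_⊥ ∈ U is a state at which η(u_⊥, σ) = u_⊥ is additionally defined for all σ ∈ Σ_uc ∩ Σ_o. Then L(S^↓) = P_{Σ_o}^{-1}( O · (Σ_uc ∩ Σ_o)^* ). -/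

import Mathlib

/-!
Unobservable events are self-loops of `S^↓`, so a string runs in `S^↓` iff its projection does.
On an observable string `S^↓` follows `η` while `η` is defined; at the first undefined event it
moves to `u_⊥` if that event is uncontrollable and blocks otherwise. Since `η` is nowhere defined
at `u_⊥`, from there `S^↓` only loops on uncontrollable events. So the projection runs iff it is
a string of `O` followed by uncontrollable observable events.
-/

open List

variable {α : Type*}

/-- Strings over a sub-alphabet `S`. -/
def Strings (S : Set α) : Set (List α) := {w | ∀ a ∈ w, a ∈ S}

/-- Natural projection onto the sub-alphabet `S`: erase letters outside `S`. -/
def proj (S : Set α) [DecidablePred (· ∈ S)] (w : List α) : List α :=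
  w.filter (fun a => decide (a ∈ S))

/-- Kleene star over the alphabet `K`. -/
def kstar (K : Set α) : Set (List α) := {t | ∀ a ∈ t, a ∈ K}

/-- Concatenation of two languages. -/
def cat (A B : Set (List α)) : Set (List α) := {u | ∃ s ∈ A, ∃ t ∈ B, u = s ++ t}

/-- A language is prefix-closed if it contains all prefixes of its members. -/
def PrefixClosed (L : Set (List α)) : Prop := ∀ s ∈ L, ∀ t, t <+: s → t ∈ L


/-- A partial deterministic automaton with state type `Q` over event type `α`. -/
structure PDA (Q α : Type*) where
  δ : Q → α → Option Q
  init : Q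

variable {Q Q₁ Q₂ Q₃ : Type*}

/-- Extension of a partial transition function to strings. -/
def runFrom (δ : Q → α → Option Q) : Q → List α → Option Q
  | q, [] => some q
  | q, a :: s => (δ q a).bind fun q' => runFrom δ q' s

/-- Closed behavior: the strings executable from the initial state. -/
def lang (M : PDA Q α) : Set (List α) := {s | (runFrom M.δ M.init s).isSome}

/-- Marked behavior with respect to a set `F` of marked states. -/
def marked (M : PDA Q α) (F : Set Q) : Set (List α) :=
  {s | ∃ q ∈ F, runFrom M.δ M.init s = some q}

variable {U : Type*}

/-- The transition function of the supervisor `S^↓` built from the observation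
automaton `M_O = (U, Σ_o, η, u0)`: follow `η` on observable events, self-loop on
unobservable (hence uncontrollable) events, and redirect undefined uncontrollable
observable events to the state `u_⊥`. -/
def etaS (So Suc : Set α) [DecidablePred (· ∈ So)] [DecidablePred (· ∈ Suc)]
    (η : U → α → Option U) (ubot : U) : U → α → Option U := fun u a =>
  if a ∈ So then
    match η u a with
    | some v => some v
    | none => if a ∈ Suc then some ubot else none
  else if a ∈ Suc then some u else none

theorem proj_mem_Strings (S : Set α) [DecidablePred (· ∈ S)] (s : List α) :
    proj S s ∈ Strings S := by
  simp [proj, Strings]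

section runFrom

variable {δ : Q → α → Option Q}

theorem runFrom_proj_of_selfloop (S : Set α) [DecidablePred (· ∈ S)]
    (hloop : ∀ q a, a ∉ S → δ q a = some q) (q : Q) (s : List α) :
    runFrom δ q (proj S s) = runFrom δ q s := by
  induction s generalizing q with
  | nil => rfl
  | cons a s ih =>
    by_cases ha : a ∈ S
    · simp [proj, runFrom, ha, ← ih]
    · simp [proj, runFrom, ha, hloop q a ha, ← ih]

theorem isSome_runFrom_iff_of_selfloop {K : Set α} {q : Q}
    (hin : ∀ a ∈ K, δ q a = some q) (hout : ∀ a ∉ K, δ q a = none) (t : List α) :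
    (runFrom δ q t).isSome ↔ t ∈ kstar K := by
  induction t with
  | nil => simp [runFrom, kstar]
  | cons a t ih =>
    by_cases ha : a ∈ K
    · simp [runFrom, kstar, hin a ha, ih, ha]
    · simp [runFrom, kstar, hout a ha, ha]

theorem kstar_subset_cat_runFrom (K : Set α) (q : Q) :
    kstar K ⊆ cat {w | (runFrom δ q w).isSome} (kstar K) :=
  fun t ht => ⟨[], rfl, t, ht, rfl⟩

theorem cons_mem_cat_runFrom_iff {K : Set α} {q : Q} {a : α} {s : List α} :
    a :: s ∈ cat {w | (runFrom δ q w).isSome} (kstar K) ↔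
      a :: s ∈ kstar K ∨ ∃ q', δ q a = some q' ∧ s ∈ cat {w | (runFrom δ q' w).isSome} (kstar K) := by
  constructor
  · rintro ⟨_ | ⟨b, w⟩, hw, t, ht, hs⟩
    · exact Or.inl (by rwa [hs])
    · obtain ⟨rfl, rfl⟩ := List.cons_eq_cons.mp hs
      cases hq : δ q a with
      | none => simp [runFrom, hq] at hw
      | some q' => exact Or.inr ⟨q', rfl, w, by simpa [runFrom, hq] using hw, t, ht, rfl⟩
  · rintro (h | ⟨q', hq', w, hw, t, ht, rfl⟩)
    · exact kstar_subset_cat_runFrom K q h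
    · exact ⟨a :: w, by simpa [runFrom, hq'] using hw, t, ht, rfl⟩

end runFrom

section etaS

variable {So Suc : Set α} [DecidablePred (· ∈ So)] [DecidablePred (· ∈ Suc)]
  {η : U → α → Option U} {ubot : U}

theorem etaS_of_notMem (hsub : ∀ a : α, a ∉ So → a ∈ Suc) (u : U) {a : α} (ha : a ∉ So) :
    etaS So Suc η ubot u a = some u := by
  simp [etaS, ha, hsub a ha]

theorem etaS_bot (hbot : ∀ a : α, η ubot a = none) (a : α) :
    etaS So Suc η ubot ubot a = if a ∈ Suc then some ubot else none := by
  by_cases h : a ∈ So <;> simp [etaS, hbot, h]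

theorem isSome_runFrom_etaS_bot_iff (hbot : ∀ a : α, η ubot a = none) (t : List α) :
    (runFrom (etaS So Suc η ubot) ubot t).isSome ↔ t ∈ kstar Suc :=
  isSome_runFrom_iff_of_selfloop (fun a ha => by simp [etaS_bot hbot, ha])
    (fun a ha => by simp [etaS_bot hbot, ha]) t

theorem isSome_runFrom_etaS_iff (hbot : ∀ a : α, η ubot a = none) {s : List α}
    (hs : s ∈ Strings So) (u : U) :
    (runFrom (etaS So Suc η ubot) u s).isSome ↔
      s ∈ cat {w | (runFrom η u w).isSome} (kstar (Suc ∩ So)) := by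
  induction s generalizing u with
  | nil => exact ⟨fun _ => kstar_subset_cat_runFrom _ u (fun _ h => nomatch h), fun _ => rfl⟩
  | cons a s ih =>
    have haSo : a ∈ So := hs a List.mem_cons_self
    have hsSo : s ∈ Strings So := fun b hb => hs b (List.mem_cons_of_mem a hb)
    rw [cons_mem_cat_runFrom_iff]
    rcases hη : η u a with _ | v
    · by_cases haSuc : a ∈ Suc
      · have hstep : etaS So Suc η ubot u a = some ubot := by simp [etaS, haSo, hη, haSuc]
        simpa [runFrom, hstep, isSome_runFrom_etaS_bot_iff hbot, kstar, haSuc, haSo] using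
          forall₂_congr fun b hb => (and_iff_left (hsSo b hb)).symm
      · have hstep : etaS So Suc η ubot u a = none := by simp [etaS, haSo, hη, haSuc]
        simp [runFrom, hstep, kstar, haSuc]
    · have hstep : etaS So Suc η ubot u a = some v := by simp [etaS, haSo, hη]
      simp only [runFrom, hstep, Option.bind_some, ih hsSo v, Option.some.injEq, exists_eq_left']
      exact (or_iff_right_of_imp fun has =>
        kstar_subset_cat_runFrom _ v fun b hb => has b (List.mem_cons_of_mem a hb)).symm

end etaS

theorem lang_Sdown_general (So Suc : Set α) [DecidablePred (· ∈ So)] [DecidablePred (· ∈ Suc)]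
    (η : U → α → Option U) (u0 ubot : U)
    (hsub : ∀ a : α, a ∉ So → a ∈ Suc)
    (hbot : ∀ a : α, η ubot a = none) :
    {s : List α | (runFrom (etaS So Suc η ubot) u0 s).isSome}
      = proj So ⁻¹' (cat {w : List α | (runFrom η u0 w).isSome}
          (kstar (Suc ∩ So))) := by
  ext s
  rw [Set.mem_preimage, ← isSome_runFrom_etaS_iff hbot (proj_mem_Strings So s),
    runFrom_proj_of_selfloop So (etaS_of_notMem hsub)]
  exact Iff.rfl

/-- if every unobservable event is uncontrollable, `M_O` is an
automaton over `Σ_o` with `u_⊥` deadlocked, then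
`L(S^↓) = P_{Σ_o}⁻¹( O · (Σ_uc ∩ Σ_o)^* )` where `O = L(M_O)`. -/
theorem lang_Sdown (So Suc : Set α) [DecidablePred (· ∈ So)] [DecidablePred (· ∈ Suc)]
    (η : U → α → Option U) (u0 ubot : U)
    (hsub : ∀ a : α, a ∉ So → a ∈ Suc)
    (halpha : ∀ u a x, η u a = some x → a ∈ So)
    (hbot : ∀ a : α, η ubot a = none) :
    {s : List α | (runFrom (etaS So Suc η ubot) u0 s).isSome}
      = proj So ⁻¹' (cat {w : List α | (runFrom η u0 w).isSome}
          (kstar (Suc ∩ So))) :=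
  lang_Sdown_general So Suc η u0 ubot hsub hbot
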